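/- arXiv:quant-ph/0310191 — 2 statements merged into one kernel-verified Lean document; each statement's English description precedes it below -/
import Mathlib

section
/- Write Ξ(l,m) = p(l,m)·P + q(l,m)·Q + r(l,m)·R + s(l,m)·S (this expansion is unique since {P, Q, R, S} is a basis of M₂(ℝ) when ad − bc ≠ 0). Then: (a) for l ≥ 1 and m ≥ 2, q(l,m) = Σ_{γ=1}^{min(l, m−1)} C(l−1, γ−1) · C(m−1, γ) · a^{l−γ} · b^γ · c^γ · d^{m−(γ+1)}; (b) for l ≥ 1 and m ≥ 1, r(l,m) = Σ_{γ=1}^{min(l,m)} C(l−1, γ−1) · C(m−1, γ−1) · a^{l−γ} · b^γ · c^{γ−1} · d^{m−γ}; (c) for l ≥ 1 and m ≥ 1, s(l,m) = Σ_{γ=1}^{min(l,m)} C(l−1, γ−1) · C(m−1, γ−1) · a^{l−γ} · b^{γ−1} · c^γ · d^{m−γ}. Here C denotes the binomial coefficient. -/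
open scoped BigOperators

/-- The matrix `P = [[a, b], [0, 0]]`. -/
noncomputable def Pmat (a b : ℝ) : Matrix (Fin 2) (Fin 2) ℝ := !![a, b; 0, 0]
/-- The matrix `Q = [[0, 0], [c, d]]`. -/
noncomputable def Qmat (c d : ℝ) : Matrix (Fin 2) (Fin 2) ℝ := !![0, 0; c, d]
/-- The matrix `R = [[c, d], [0, 0]]`. -/
noncomputable def Rmat (c d : ℝ) : Matrix (Fin 2) (Fin 2) ℝ := !![c, d; 0, 0]
/-- The matrix `S = [[0, 0], [a, b]]`. -/
noncomputable def Smat (a b : ℝ) : Matrix (Fin 2) (Fin 2) ℝ := !![0, 0; a, b]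

/-- `Xi Pm Qm l m` is the sum, over all words of length `l + m` in the letters `Pm`, `Qm`
containing exactly `l` letters `Pm` and `m` letters `Qm`, of the ordered matrix product of the
letters of the word (a word is encoded as `w : Fin (l+m) → Bool`, `true` standing for `Pm`). -/
noncomputable def Xi (Pm Qm : Matrix (Fin 2) (Fin 2) ℝ) (l m : ℕ) :
    Matrix (Fin 2) (Fin 2) ℝ :=
  ∑ w ∈ Finset.univ.filter
      (fun w : Fin (l + m) → Bool => (Finset.univ.filter (fun i => w i = true)).card = l),
    (List.ofFn (fun i => if w i = true then Pm else Qm)).prod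

/-!
Peeling off the first letter of a word gives `Ξ(l+1, m+1) = P Ξ(l, m+1) + Q Ξ(l+1, m)`, while
`Ξ(l, 0) = P^l` and `Ξ(0, m) = Q^m`. The products `PP = aP, PQ = bR, PR = aR, PS = bP, QP = cS,
QQ = dQ, QR = cQ, QS = dS` make left multiplication by `P` and `Q` act linearly on the
coefficients of `Ξ(l+1, m+1)` in `P, Q, R, S`. Writing `x = bc`, `B_a(n, j) = C(n, j) a^(n-j)`
and `G_αβ(l, m) = Σ_i B_a(l, i+α) B_d(m, i+β) x^i` (`binomTerm`, `binomPairSum`), these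
coefficients are `x G₁₀, x G₀₁, b G₀₀, c G₀₀`: Pascal's rule for `B` turns the recursion for `Ξ`
into matching linear recursions for the `G`s. As `ad - bc ≠ 0`, the matrices `P, Q, R, S` are
linearly independent, so these are the only coefficients.
-/

open Finset

lemma sum_Icc_one_eq_sum_range {M : Type*} [AddCommMonoid M] (f : ℕ → M) (K : ℕ) :
    ∑ γ ∈ Icc 1 K, f γ = ∑ i ∈ range K, f (i + 1) := by
  rw [← Ico_add_one_right_eq_Icc, sum_Ico_eq_sum_range, add_tsub_cancel_right]
  exact sum_congr rfl fun i _ => by rw [add_comm]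

lemma pow_succ_eq_smul_of_mul_self_eq_smul {S A : Type*} [Monoid S] [Monoid A] [MulAction S A]
    [IsScalarTower S A A] {x : A} {t : S} (h : x * x = t • x) (n : ℕ) :
    x ^ (n + 1) = t ^ n • x := by
  induction n with
  | zero => rw [zero_add, pow_one, pow_zero, one_smul]
  | succ n ih => rw [pow_succ, ih, smul_mul_assoc, h, smul_smul, ← pow_succ]

section WordSum

variable {R : Type*} [Semiring R] (x y : R)

noncomputable def wordSum (n k : ℕ) : R :=
  ∑ w ∈ Finset.univ.filter
      (fun w : Fin n → Bool => (Finset.univ.filter (fun i => w i = true)).card = k),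
    (List.ofFn (fun i => if w i = true then x else y)).prod

lemma wordSum_succ (n k : ℕ) :
    wordSum x y (n + 1) k =
      x * ∑ w : Fin n → Bool with #{i | w i = true} + 1 = k,
        (List.ofFn (fun i => if w i = true then x else y)).prod + y * wordSum x y n k := by
  rw [wordSum, sum_filter, ← (Fin.consEquiv fun _ => Bool).sum_comp, Fintype.sum_prod_type,
    Fintype.sum_bool, wordSum, mul_sum, mul_sum, sum_filter, sum_filter]
  congr 1 <;> refine sum_congr rfl fun w _ => ?_ <;>
    rw [Fin.card_filter_univ_succ'] <;> simp [Fin.consEquiv, List.ofFn_succ, add_comm]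

lemma wordSum_succ_succ (n k : ℕ) :
    wordSum x y (n + 1) (k + 1) = x * wordSum x y n k + y * wordSum x y n (k + 1) := by
  simp only [wordSum_succ, add_left_inj]
  rfl

lemma wordSum_succ_zero (n : ℕ) : wordSum x y (n + 1) 0 = y * wordSum x y n 0 := by
  simp [wordSum_succ]

lemma wordSum_zero_zero : wordSum x y 0 0 = 1 := by
  simp [wordSum]

lemma wordSum_eq_zero_of_lt {n k : ℕ} (h : n < k) : wordSum x y n k = 0 := by
  refine sum_eq_zero fun w hw => absurd (mem_filter.1 hw).2 (ne_of_lt ?_)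
  exact (card_filter_le _ _).trans_lt (by simpa using h)

lemma wordSum_self (n : ℕ) : wordSum x y n n = x ^ n := by
  induction n with
  | zero => rw [pow_zero, wordSum_zero_zero]
  | succ n ih =>
    rw [wordSum_succ_succ, ih, wordSum_eq_zero_of_lt x y n.lt_succ_self, mul_zero, add_zero,
      pow_succ']

lemma wordSum_zero_right (n : ℕ) : wordSum x y n 0 = y ^ n := by
  induction n with
  | zero => rw [pow_zero, wordSum_zero_zero]
  | succ n ih => rw [wordSum_succ_zero, ih, pow_succ']

end WordSum

section Xi

variable (Pm Qm : Matrix (Fin 2) (Fin 2) ℝ) (l m : ℕ)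

lemma Xi_eq_wordSum : Xi Pm Qm l m = wordSum Pm Qm (l + m) l := rfl

lemma Xi_zero_right : Xi Pm Qm l 0 = Pm ^ l := wordSum_self Pm Qm l

lemma Xi_zero_left : Xi Pm Qm 0 m = Qm ^ m := by
  rw [Xi_eq_wordSum, zero_add, wordSum_zero_right]

lemma Xi_succ_succ :
    Xi Pm Qm (l + 1) (m + 1) = Pm * Xi Pm Qm l (m + 1) + Qm * Xi Pm Qm (l + 1) m := by
  rw [Xi_eq_wordSum, Xi_eq_wordSum, Xi_eq_wordSum, show l + 1 + (m + 1) = l + (m + 1) + 1 by omega,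
    show l + 1 + m = l + (m + 1) by omega, wordSum_succ_succ]

end Xi

section Binomial

variable {R : Type*} [CommSemiring R]

noncomputable def binomTerm (a : R) (n j : ℕ) : R := n.choose j * a ^ (n - j)

lemma binomTerm_zero_right (a : R) (n : ℕ) : binomTerm a n 0 = a ^ n := by
  simp [binomTerm]

lemma binomTerm_eq_zero_of_lt (a : R) {n j : ℕ} (h : n < j) : binomTerm a n j = 0 := by
  simp [binomTerm, Nat.choose_eq_zero_of_lt h]

lemma binomTerm_succ_succ (a : R) (n j : ℕ) :
    binomTerm a (n + 1) (j + 1) = a * binomTerm a n (j + 1) + binomTerm a n j := by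
  rcases lt_or_ge j n with h | h
  · obtain ⟨k, rfl⟩ := Nat.exists_eq_add_of_lt h
    simp only [binomTerm, Nat.choose_succ_succ', Nat.cast_add,
      show j + k + 1 + 1 - (j + 1) = k + 1 by omega, show j + k + 1 - (j + 1) = k by omega,
      show j + k + 1 - j = k + 1 by omega]
    ring
  · simp [binomTerm, Nat.choose_succ_succ', Nat.choose_eq_zero_of_lt (Nat.lt_succ_of_le h)]

noncomputable def binomPairSum (a d x : R) (α β l m : ℕ) : R :=
  ∑ i ∈ range (l + 1), binomTerm a l (i + α) * binomTerm d m (i + β) * x ^ i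

variable (a d x : R) (α β l m : ℕ)

lemma binomPairSum_eq_sum_range {N : ℕ} (hN : l < N + α ∨ m < N + β) :
    binomPairSum a d x α β l m =
      ∑ i ∈ range N, binomTerm a l (i + α) * binomTerm d m (i + β) * x ^ i := by
  have vanish : ∀ i, l < i + α ∨ m < i + β →
      binomTerm a l (i + α) * binomTerm d m (i + β) * x ^ i = 0 := by
    rintro i (h | h) <;> simp [binomTerm_eq_zero_of_lt _ h]
  rcases le_total N (l + 1) with h | h
  · exact eventually_constant_sum (fun i hi => vanish i (by omega)) h
  · exact (eventually_constant_sum (fun i hi => vanish i (by omega)) h).symm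

lemma binomPairSum_comm : binomPairSum a d x α β l m = binomPairSum d a x β α m l := by
  rw [binomPairSum_eq_sum_range a d x α β l m (N := l + m + 1) (by omega),
    binomPairSum_eq_sum_range d a x β α m l (N := l + m + 1) (by omega)]
  exact sum_congr rfl fun i _ => by ring

lemma binomPairSum_succ_left_zero : binomPairSum a d x (α + 1) β 0 m = 0 := by
  simp [binomPairSum, binomTerm_eq_zero_of_lt]

lemma binomPairSum_zero_left_zero : binomPairSum a d x 0 0 0 m = d ^ m := by
  simp [binomPairSum, binomTerm_zero_right]

lemma binomPairSum_succ_left_succ :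
    binomPairSum a d x (α + 1) β (l + 1) m =
      a * binomPairSum a d x (α + 1) β l m + binomPairSum a d x α β l m := by
  rw [binomPairSum, binomPairSum_eq_sum_range a d x (α + 1) β l m (N := l + 2) (by omega),
    binomPairSum_eq_sum_range a d x α β l m (N := l + 2) (by omega), mul_sum, ← sum_add_distrib]
  refine sum_congr rfl fun i _ => ?_
  rw [← add_assoc, binomTerm_succ_succ]
  ring

lemma binomPairSum_zero_left_succ :
    binomPairSum a d x 0 β (l + 1) m =
      a * binomPairSum a d x 0 β l m + x * binomPairSum a d x 0 (β + 1) l m := by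
  rw [binomPairSum, binomPairSum_eq_sum_range a d x 0 β l m (N := l + 2) (by omega),
    binomPairSum, sum_range_succ', sum_range_succ' _ (l + 1), mul_add, mul_sum, mul_sum,
    add_right_comm, ← sum_add_distrib]
  simp only [add_zero, zero_add, binomTerm_zero_right]
  congr 1
  · refine sum_congr rfl fun i _ => ?_
    rw [binomTerm_succ_succ, show i + (β + 1) = i + 1 + β by omega]
    ring
  · ring

lemma binomPairSum_succ_right_zero : binomPairSum a d x α (β + 1) l 0 = 0 := by
  rw [binomPairSum_comm, binomPairSum_succ_left_zero]

lemma binomPairSum_zero_right_zero : binomPairSum a d x 0 0 l 0 = a ^ l := by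
  rw [binomPairSum_comm, binomPairSum_zero_left_zero]

lemma binomPairSum_succ_right_succ :
    binomPairSum a d x α (β + 1) l (m + 1) =
      d * binomPairSum a d x α (β + 1) l m + binomPairSum a d x α β l m := by
  simp only [binomPairSum_comm a d x _ _ l]
  exact binomPairSum_succ_left_succ d a x β α m l

lemma binomPairSum_zero_right_succ :
    binomPairSum a d x α 0 l (m + 1) =
      d * binomPairSum a d x α 0 l m + x * binomPairSum a d x (α + 1) 0 l m := by
  simp only [binomPairSum_comm a d x _ _ l]
  exact binomPairSum_zero_left_succ d a x α m l

lemma mul_binomPairSum_zero_one_eq_sum_Icc (b c : R) :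
    b * c * binomPairSum a d (b * c) 0 1 l m =
      ∑ γ ∈ Icc 1 (min (l + 1) m), (l.choose (γ - 1) : R) * m.choose γ *
        a ^ (l + 1 - γ) * b ^ γ * c ^ γ * d ^ (m - γ) := by
  have hN : l < min (l + 1) m + 0 ∨ m < min (l + 1) m + 1 := by omega
  rw [sum_Icc_one_eq_sum_range, binomPairSum_eq_sum_range a d (b * c) 0 1 l m hN, mul_sum]
  refine sum_congr rfl fun i _ => ?_
  simp only [binomTerm, Nat.add_sub_cancel, Nat.add_sub_add_right, add_zero]
  ring

lemma mul_binomPairSum_zero_zero_eq_sum_Icc (b c : R) :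
    b * binomPairSum a d (b * c) 0 0 l m =
      ∑ γ ∈ Icc 1 (min (l + 1) (m + 1)), (l.choose (γ - 1) : R) * m.choose (γ - 1) *
        a ^ (l + 1 - γ) * b ^ γ * c ^ (γ - 1) * d ^ (m + 1 - γ) := by
  have hN : l < min (l + 1) (m + 1) + 0 ∨ m < min (l + 1) (m + 1) + 0 := by omega
  rw [sum_Icc_one_eq_sum_range, binomPairSum_eq_sum_range a d (b * c) 0 0 l m hN, mul_sum]
  refine sum_congr rfl fun i _ => ?_
  simp only [binomTerm, Nat.add_sub_cancel, Nat.add_sub_add_right, add_zero]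
  ring

lemma mul_binomPairSum_zero_zero_eq_sum_Icc' (b c : R) :
    c * binomPairSum a d (b * c) 0 0 l m =
      ∑ γ ∈ Icc 1 (min (l + 1) (m + 1)), (l.choose (γ - 1) : R) * m.choose (γ - 1) *
        a ^ (l + 1 - γ) * b ^ (γ - 1) * c ^ γ * d ^ (m + 1 - γ) := by
  have hN : l < min (l + 1) (m + 1) + 0 ∨ m < min (l + 1) (m + 1) + 0 := by omega
  rw [sum_Icc_one_eq_sum_range, binomPairSum_eq_sum_range a d (b * c) 0 0 l m hN, mul_sum]
  refine sum_congr rfl fun i _ => ?_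
  simp only [binomTerm, Nat.add_sub_cancel, Nat.add_sub_add_right, add_zero]
  ring

end Binomial

section Matrices

variable (a b c d : ℝ)

lemma Pmat_mul_Pmat : Pmat a b * Pmat a b = a • Pmat a b := by
  ext i j; fin_cases i <;> fin_cases j <;> simp [Pmat, Matrix.mul_apply]

lemma Pmat_mul_Qmat : Pmat a b * Qmat c d = b • Rmat c d := by
  ext i j; fin_cases i <;> fin_cases j <;> simp [Pmat, Qmat, Rmat, Matrix.mul_apply]

lemma Pmat_mul_Rmat : Pmat a b * Rmat c d = a • Rmat c d := by
  ext i j; fin_cases i <;> fin_cases j <;> simp [Pmat, Rmat, Matrix.mul_apply]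

lemma Pmat_mul_Smat : Pmat a b * Smat a b = b • Pmat a b := by
  ext i j; fin_cases i <;> fin_cases j <;> simp [Pmat, Smat, Matrix.mul_apply, mul_comm]

lemma Qmat_mul_Pmat : Qmat c d * Pmat a b = c • Smat a b := by
  ext i j; fin_cases i <;> fin_cases j <;> simp [Qmat, Pmat, Smat, Matrix.mul_apply]

lemma Qmat_mul_Qmat : Qmat c d * Qmat c d = d • Qmat c d := by
  ext i j; fin_cases i <;> fin_cases j <;> simp [Qmat, Matrix.mul_apply]

lemma Qmat_mul_Rmat : Qmat c d * Rmat c d = c • Qmat c d := by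
  ext i j; fin_cases i <;> fin_cases j <;> simp [Qmat, Rmat, Matrix.mul_apply, mul_comm]

lemma Qmat_mul_Smat : Qmat c d * Smat a b = d • Smat a b := by
  ext i j; fin_cases i <;> fin_cases j <;> simp [Qmat, Smat, Matrix.mul_apply]

lemma linearIndependent_Pmat_Qmat_Rmat_Smat (h : a * d - b * c ≠ 0) :
    LinearIndependent ℝ ![Pmat a b, Qmat c d, Rmat c d, Smat a b] := by
  rw [Fintype.linearIndependent_iff]
  intro g hg
  simp only [Fin.sum_univ_four, Pmat, Qmat, Rmat, Smat] at hg
  have h00 : g 0 * a + g 2 * c = 0 := by simpa using congr_fun₂ hg 0 0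
  have h01 : g 0 * b + g 2 * d = 0 := by simpa using congr_fun₂ hg 0 1
  have h10 : g 1 * c + g 3 * a = 0 := by simpa using congr_fun₂ hg 1 0
  have h11 : g 1 * d + g 3 * b = 0 := by simpa using congr_fun₂ hg 1 1
  have cancel (t : ℝ) (ht : (a * d - b * c) * t = 0) : t = 0 := (mul_eq_zero.1 ht).resolve_left h
  have g0 : g 0 = 0 := cancel _ (by linear_combination d * h00 - c * h01)
  have g1 : g 1 = 0 := cancel _ (by linear_combination a * h11 - b * h10)
  have g2 : g 2 = 0 := cancel _ (by linear_combination a * h01 - b * h00)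
  have g3 : g 3 = 0 := cancel _ (by linear_combination d * h10 - c * h11)
  intro i
  fin_cases i <;> assumption

end Matrices

section Expansion

variable (a b c d : ℝ)

noncomputable def xiExpansion (l m : ℕ) : Matrix (Fin 2) (Fin 2) ℝ :=
  (b * c * binomPairSum a d (b * c) 1 0 l m) • Pmat a b +
    (b * c * binomPairSum a d (b * c) 0 1 l m) • Qmat c d +
    (b * binomPairSum a d (b * c) 0 0 l m) • Rmat c d +
    (c * binomPairSum a d (b * c) 0 0 l m) • Smat a b

lemma Pmat_mul_Xi_zero_left (m : ℕ) :
    Pmat a b * Xi (Pmat a b) (Qmat c d) 0 (m + 1) =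
      (b * c * binomPairSum a d (b * c) 1 0 0 m) • Pmat a b +
        (b * binomPairSum a d (b * c) 0 0 0 m) • Rmat c d := by
  rw [Xi_zero_left, pow_succ_eq_smul_of_mul_self_eq_smul (Qmat_mul_Qmat c d), mul_smul_comm,
    Pmat_mul_Qmat, binomPairSum_succ_left_zero, binomPairSum_zero_left_zero]
  module

lemma Qmat_mul_Xi_zero_right (l : ℕ) :
    Qmat c d * Xi (Pmat a b) (Qmat c d) (l + 1) 0 =
      (b * c * binomPairSum a d (b * c) 0 1 l 0) • Qmat c d +
        (c * binomPairSum a d (b * c) 0 0 l 0) • Smat a b := by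
  rw [Xi_zero_right, pow_succ_eq_smul_of_mul_self_eq_smul (Pmat_mul_Pmat a b), mul_smul_comm,
    Qmat_mul_Pmat, binomPairSum_succ_right_zero, binomPairSum_zero_right_zero]
  module

lemma Pmat_mul_xiExpansion (l m : ℕ) :
    Pmat a b * xiExpansion a b c d l m =
      (b * c * binomPairSum a d (b * c) 1 0 (l + 1) m) • Pmat a b +
        (b * binomPairSum a d (b * c) 0 0 (l + 1) m) • Rmat c d := by
  simp only [xiExpansion, mul_add, mul_smul_comm, Pmat_mul_Pmat, Pmat_mul_Qmat, Pmat_mul_Rmat,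
    Pmat_mul_Smat, binomPairSum_succ_left_succ, binomPairSum_zero_left_succ]
  module

lemma Qmat_mul_xiExpansion (l m : ℕ) :
    Qmat c d * xiExpansion a b c d l m =
      (b * c * binomPairSum a d (b * c) 0 1 l (m + 1)) • Qmat c d +
        (c * binomPairSum a d (b * c) 0 0 l (m + 1)) • Smat a b := by
  simp only [xiExpansion, mul_add, mul_smul_comm, Qmat_mul_Pmat, Qmat_mul_Qmat, Qmat_mul_Rmat,
    Qmat_mul_Smat, binomPairSum_succ_right_succ, binomPairSum_zero_right_succ]
  module

theorem Xi_succ_succ_eq_xiExpansion (l m : ℕ) :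
    Xi (Pmat a b) (Qmat c d) (l + 1) (m + 1) = xiExpansion a b c d l m := by
  have hP : Pmat a b * Xi (Pmat a b) (Qmat c d) l (m + 1) =
      (b * c * binomPairSum a d (b * c) 1 0 l m) • Pmat a b +
        (b * binomPairSum a d (b * c) 0 0 l m) • Rmat c d := by
    cases l with
    | zero => exact Pmat_mul_Xi_zero_left a b c d m
    | succ l => rw [Xi_succ_succ_eq_xiExpansion l m, Pmat_mul_xiExpansion]
  have hQ : Qmat c d * Xi (Pmat a b) (Qmat c d) (l + 1) m =
      (b * c * binomPairSum a d (b * c) 0 1 l m) • Qmat c d +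
        (c * binomPairSum a d (b * c) 0 0 l m) • Smat a b := by
    cases m with
    | zero => exact Qmat_mul_Xi_zero_right a b c d l
    | succ m => rw [Xi_succ_succ_eq_xiExpansion l m, Qmat_mul_xiExpansion]
  rw [Xi_succ_succ, hP, hQ, xiExpansion]
  abel
termination_by l + m

lemma coeffs_eq_of_Xi_succ_succ_eq (hΔ : a * d - b * c ≠ 0) {l m : ℕ} {p q r s : ℝ}
    (h : Xi (Pmat a b) (Qmat c d) (l + 1) (m + 1) =
      p • Pmat a b + q • Qmat c d + r • Rmat c d + s • Smat a b) :
    q = b * c * binomPairSum a d (b * c) 0 1 l m ∧ r = b * binomPairSum a d (b * c) 0 0 l m ∧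
      s = c * binomPairSum a d (b * c) 0 0 l m := by
  have hcoeff := Fintype.linearIndependent_iffₛ.1
    (linearIndependent_Pmat_Qmat_Rmat_Smat a b c d hΔ) ![p, q, r, s] ![_, _, _, _]
    (by simpa [Fin.sum_univ_four, xiExpansion] using h.symm.trans (Xi_succ_succ_eq_xiExpansion ..))
  exact ⟨hcoeff 1, hcoeff 2, hcoeff 3⟩

end Expansion

theorem qrs_coefficients_general (a d b c : ℝ) (hΔ : a * d - b * c ≠ 0) :
    (∀ l m : ℕ, 1 ≤ l → 2 ≤ m → ∀ p q r s : ℝ,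
      Xi (Pmat a b) (Qmat c d) l m =
          p • Pmat a b + q • Qmat c d + r • Rmat c d + s • Smat a b →
      q = ∑ γ ∈ Finset.Icc 1 (min l (m - 1)),
            (Nat.choose (l - 1) (γ - 1) : ℝ) * (Nat.choose (m - 1) γ : ℝ)
              * a ^ (l - γ) * b ^ γ * c ^ γ * d ^ (m - (γ + 1))) ∧
    (∀ l m : ℕ, 1 ≤ l → 1 ≤ m → ∀ p q r s : ℝ,
      Xi (Pmat a b) (Qmat c d) l m =
          p • Pmat a b + q • Qmat c d + r • Rmat c d + s • Smat a b →
      r = ∑ γ ∈ Finset.Icc 1 (min l m),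
            (Nat.choose (l - 1) (γ - 1) : ℝ) * (Nat.choose (m - 1) (γ - 1) : ℝ)
              * a ^ (l - γ) * b ^ γ * c ^ (γ - 1) * d ^ (m - γ) ∧
      s = ∑ γ ∈ Finset.Icc 1 (min l m),
            (Nat.choose (l - 1) (γ - 1) : ℝ) * (Nat.choose (m - 1) (γ - 1) : ℝ)
              * a ^ (l - γ) * b ^ (γ - 1) * c ^ γ * d ^ (m - γ)) := by
  refine ⟨fun l m hl hm p q r s h => ?_, fun l m hl hm p q r s h => ?_⟩
  · obtain ⟨l, rfl⟩ := Nat.exists_eq_add_of_le' hl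
    obtain ⟨m, rfl⟩ := Nat.exists_eq_add_of_le' (one_le_two.trans hm)
    simp only [Nat.add_sub_cancel, Nat.add_sub_add_right]
    rw [(coeffs_eq_of_Xi_succ_succ_eq a b c d hΔ h).1, mul_binomPairSum_zero_one_eq_sum_Icc]
  · obtain ⟨l, rfl⟩ := Nat.exists_eq_add_of_le' hl
    obtain ⟨m, rfl⟩ := Nat.exists_eq_add_of_le' hm
    obtain ⟨-, hr, hs⟩ := coeffs_eq_of_Xi_succ_succ_eq a b c d hΔ h
    simp only [Nat.add_sub_cancel]
    exact ⟨hr.trans (mul_binomPairSum_zero_zero_eq_sum_Icc ..),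
      hs.trans (mul_binomPairSum_zero_zero_eq_sum_Icc' ..)⟩

/-- In the (unique) expansion `Ξ(l,m) = p P + q Q + r R + s S`:
(a) for `l ≥ 1`, `m ≥ 2`,
`q(l,m) = Σ_{γ=1}^{min(l,m−1)} C(l−1,γ−1) C(m−1,γ) a^{l−γ} b^γ c^γ d^{m−(γ+1)}`;
(b) for `l ≥ 1`, `m ≥ 1`,
`r(l,m) = Σ_{γ=1}^{min(l,m)} C(l−1,γ−1) C(m−1,γ−1) a^{l−γ} b^γ c^{γ−1} d^{m−γ}`;
(c) for `l ≥ 1`, `m ≥ 1`,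
`s(l,m) = Σ_{γ=1}^{min(l,m)} C(l−1,γ−1) C(m−1,γ−1) a^{l−γ} b^{γ−1} c^γ d^{m−γ}`. -/
theorem qrs_coefficients (a d b c : ℝ) (ha : 0 < a) (ha1 : a < 1) (hd : 0 < d) (hd1 : d < 1)
    (hb : b = 1 - d) (hc : c = 1 - a) (hΔ : a * d - b * c ≠ 0) :
    (∀ l m : ℕ, 1 ≤ l → 2 ≤ m → ∀ p q r s : ℝ,
      Xi (Pmat a b) (Qmat c d) l m =
          p • Pmat a b + q • Qmat c d + r • Rmat c d + s • Smat a b →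
      q = ∑ γ ∈ Finset.Icc 1 (min l (m - 1)),
            (Nat.choose (l - 1) (γ - 1) : ℝ) * (Nat.choose (m - 1) γ : ℝ)
              * a ^ (l - γ) * b ^ γ * c ^ γ * d ^ (m - (γ + 1))) ∧
    (∀ l m : ℕ, 1 ≤ l → 1 ≤ m → ∀ p q r s : ℝ,
      Xi (Pmat a b) (Qmat c d) l m =
          p • Pmat a b + q • Qmat c d + r • Rmat c d + s • Smat a b →
      r = ∑ γ ∈ Finset.Icc 1 (min l m),
            (Nat.choose (l - 1) (γ - 1) : ℝ) * (Nat.choose (m - 1) (γ - 1) : ℝ)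
              * a ^ (l - γ) * b ^ γ * c ^ (γ - 1) * d ^ (m - γ) ∧
      s = ∑ γ ∈ Finset.Icc 1 (min l m),
            (Nat.choose (l - 1) (γ - 1) : ℝ) * (Nat.choose (m - 1) (γ - 1) : ℝ)
              * a ^ (l - γ) * b ^ (γ - 1) * c ^ γ * d ^ (m - γ)) :=
  qrs_coefficients_general a d b c hΔ
end

section
/- Fix θ ∈ (0,1) and x ∈ (0, 1/2). For each n ≥ 1 let aₙ = 1 − θ/n and zₙ = (1 − aₙ)²/aₙ². Let (kₙ) be a sequence of integers with 1 ≤ kₙ ≤ n − 1 and kₙ/n → x as n → ∞. Then Σ_{γ=1}^{kₙ} zₙ^{γ−1} · (1/γ) · C(kₙ−1, γ−1) · C(n−kₙ−1, γ−1) converges as n → ∞ to I₁(2θ√(x(1−x)))/(θ√(x(1−x))), where C denotes the binomial coefficient. (This sum equals the terminating hypergeometric value ₂F₁(−(kₙ−1), −(n−kₙ−1); 2; zₙ).) -/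
/-! Put `m = γ - 1`. The `m`-th summand is `zₙ^m C(aₙ, m) C(bₙ, m) / (m + 1)` with
`aₙ = kₙ - 1`, `bₙ = n - kₙ - 1`. Since `n² zₙ → θ²` and `C(aₙ, m) / n^m → α^m / m!` whenever
`aₙ / n → α`, it tends to `(θ² x (1 - x))^m / (m!² (m + 1))`, which is the `m`-th term of the
series of `I₁(2t) / t` at `t = θ √(x (1 - x))`. Because `zₙ ≤ 4θ² / n²` and
`C(aₙ, m) ≤ n^m / m!`, the summands are bounded by `(4θ²)^m / m!` uniformly in `n`, so Tannery's
theorem lets the limit pass through the sum. -/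

open scoped BigOperators

/-- The modified Bessel function `I₁(z) = Σ_{n=0}^∞ (z/2)^{2n+1}/(n!·(n+1)!)`. -/
noncomputable def besselI1 (z : ℝ) : ℝ :=
  ∑' n : ℕ, (z / 2) ^ (2 * n + 1) / ((Nat.factorial n : ℝ) * (Nat.factorial (n + 1) : ℝ))

open Filter Topology Finset
open scoped Nat

lemma besselI1_two_mul_div (t : ℝ) (ht : t ≠ 0) :
    besselI1 (2 * t) / t = ∑' m : ℕ, (t ^ 2) ^ m / ((m ! : ℝ) ^ 2 * (m + 1)) := by
  rw [besselI1, ← tsum_div_const]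
  refine tsum_congr fun m => ?_
  rw [Nat.factorial_succ, mul_div_cancel_left₀ t two_ne_zero, pow_succ, pow_mul]
  push_cast
  field_simp

lemma cast_choose_eq_prod_div (a m : ℕ) :
    (a.choose m : ℝ) = (∏ j ∈ range m, ((a : ℝ) - j)) / m ! := by
  rw [Nat.cast_choose_eq_descPochhammer_div, descPochhammer_eval_eq_prod_range]

lemma tendsto_choose_div_pow {a : ℕ → ℕ} {α : ℝ}
    (h : Tendsto (fun n => (a n : ℝ) / n) atTop (𝓝 α)) (m : ℕ) :
    Tendsto (fun n => ((a n).choose m : ℝ) / (n : ℝ) ^ m) atTop (𝓝 (α ^ m / m !)) := by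
  have hfactor (j : ℕ) : Tendsto (fun n => (a n : ℝ) / n - j / n) atTop (𝓝 α) := by
    simpa using h.sub (tendsto_const_div_atTop_nhds_zero_nat (j : ℝ))
  have hprod := (tendsto_finsetProd (range m) fun j _ => hfactor j).div_const (m ! : ℝ)
  rw [prod_const, card_range] at hprod
  refine hprod.congr fun n => ?_
  simp_rw [cast_choose_eq_prod_div, div_right_comm _ (m ! : ℝ), ← sub_div, prod_div_distrib,
    prod_const, card_range]

lemma tendsto_natCast_sub_div {a : ℕ → ℕ} {α : ℝ}
    (h : Tendsto (fun n => (a n : ℝ) / n) atTop (𝓝 α)) (c : ℕ) :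
    Tendsto (fun n => ((a n - c : ℕ) : ℝ) / n) atTop (𝓝 α) := by
  have hlower : Tendsto (fun n => ((a n : ℝ) - c) / n) atTop (𝓝 α) := by
    simpa [sub_div] using h.sub (tendsto_const_div_atTop_nhds_zero_nat (c : ℝ))
  refine tendsto_of_tendsto_of_tendsto_of_le_of_le hlower h (fun n => ?_) fun n => ?_
  · gcongr
    rw [sub_le_iff_le_add]
    rw [← Nat.cast_add]
    exact Nat.cast_le.mpr le_tsub_add
  · gcongr
    exact Nat.sub_le _ _

lemma tendsto_sub_natCast_div {a : ℕ → ℕ} {α : ℝ} (ha : ∀ᶠ n in atTop, a n ≤ n)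
    (h : Tendsto (fun n => (a n : ℝ) / n) atTop (𝓝 α)) :
    Tendsto (fun n => ((n - a n : ℕ) : ℝ) / n) atTop (𝓝 (1 - α)) := by
  refine (tendsto_const_nhds.sub h).congr' ?_
  filter_upwards [ha, eventually_ne_atTop 0] with n han hn
  rw [Nat.cast_sub han, sub_div, div_self (by exact_mod_cast hn)]

lemma abs_div_one_sub_le {t : ℝ} (ht : |t| ≤ 1 / 2) : |t / (1 - t)| ≤ 2 * |t| := by
  have hden : 1 / 2 ≤ |1 - t| := by
    linarith [abs_sub_abs_le_abs_sub 1 t, abs_one (α := ℝ)]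
  rw [abs_div, div_le_iff₀ (by linarith)]
  nlinarith [abs_nonneg t]

lemma tendsto_one_sub_sub_sq_div_sq_mul_sq (θ : ℝ) :
    Tendsto (fun n : ℕ => (1 - (1 - θ / n)) ^ 2 / (1 - θ / n) ^ 2 * n ^ 2) atTop
      (𝓝 (θ ^ 2)) := by
  have hden : Tendsto (fun n : ℕ => 1 - θ / n) atTop (𝓝 1) := by
    simpa using tendsto_const_nhds.sub (tendsto_const_div_atTop_nhds_zero_nat θ)
  have hlim : Tendsto (fun n : ℕ => (θ / (1 - θ / n)) ^ 2) atTop (𝓝 (θ ^ 2)) := by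
    simpa using (tendsto_const_nhds.div hden one_ne_zero).pow 2
  refine hlim.congr' ((eventually_ne_atTop 0).mono fun n hn => ?_)
  have hn : (n : ℝ) ≠ 0 := by exact_mod_cast hn
  dsimp only
  rw [sub_sub_cancel, div_pow, div_pow, div_right_comm, div_mul_cancel₀ _ (pow_ne_zero 2 hn)]

lemma eventually_abs_one_sub_sub_sq_div_sq_le (θ : ℝ) :
    ∀ᶠ n : ℕ in atTop, |(1 - (1 - θ / n)) ^ 2 / (1 - θ / n) ^ 2| ≤ 4 * θ ^ 2 / n ^ 2 := by
  have hsmall := (tendsto_const_div_atTop_nhds_zero_nat θ).abs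
  rw [abs_zero] at hsmall
  filter_upwards [hsmall.eventually (eventually_le_nhds (by norm_num : (0 : ℝ) < 1 / 2))]
    with n hn
  rw [sub_sub_cancel, ← div_pow, abs_pow, show 4 * θ ^ 2 / n ^ 2 = (2 * |θ / n|) ^ 2 by
    rw [mul_pow, sq_abs, div_pow]; ring]
  exact pow_le_pow_left₀ (abs_nonneg _) (abs_div_one_sub_le hn) 2

/-- `₂F₁(-a, -b; 2; z) = ∑ₘ hypergeomTerm z a b m`. -/
noncomputable def hypergeomTerm (z : ℝ) (a b m : ℕ) : ℝ :=
  z ^ m * (1 / ((m : ℝ) + 1)) * a.choose m * b.choose m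

lemma sum_Icc_eq_tsum_hypergeomTerm (z : ℝ) {k : ℕ} (hk : 1 ≤ k) (b : ℕ) :
    ∑ γ ∈ Icc 1 k, z ^ (γ - 1) * (1 / (γ : ℝ)) * ((k - 1).choose (γ - 1) : ℝ)
        * (b.choose (γ - 1) : ℝ) = ∑' m, hypergeomTerm z (k - 1) b m := by
  have hvanish : ∀ m ∉ range k, hypergeomTerm z (k - 1) b m = 0 := fun m hm => by
    rw [hypergeomTerm, Nat.choose_eq_zero_of_lt (by rw [mem_range] at hm; omega)]
    simp
  rw [tsum_eq_sum hvanish, ← Ico_add_one_right_eq_Icc, sum_Ico_eq_sum_range,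
    Nat.add_sub_cancel]
  refine sum_congr rfl fun m _ => ?_
  simp only [hypergeomTerm, Nat.add_sub_cancel_left]
  push_cast
  ring

lemma norm_hypergeomTerm_le {z C N : ℝ} {a b : ℕ} (hN : 0 < N) (hz : |z| ≤ C / N ^ 2)
    (ha : (a : ℝ) ≤ N) (hb : (b : ℝ) ≤ N) (m : ℕ) :
    ‖hypergeomTerm z a b m‖ ≤ C ^ m / m ! := by
  have hCN : 0 ≤ C / N ^ 2 := (abs_nonneg z).trans hz
  have hC : 0 ≤ C := by
    simpa [hN.ne'] using mul_nonneg hCN (sq_nonneg N)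
  have hchoose {c : ℕ} (hc : (c : ℝ) ≤ N) : (c.choose m : ℝ) ≤ N ^ m / m ! :=
    (Nat.choose_le_pow_div m c).trans (by gcongr)
  have hfac : (1 : ℝ) ≤ m ! := Nat.one_le_cast.mpr m.factorial_pos
  have hinv : 1 / ((m : ℝ) + 1) ≤ 1 := by
    rw [div_le_one (by positivity)]; linarith [m.cast_nonneg (α := ℝ)]
  calc ‖hypergeomTerm z a b m‖
      = |z| ^ m * (1 / ((m : ℝ) + 1)) * a.choose m * b.choose m := by
        simp only [hypergeomTerm, Real.norm_eq_abs, abs_mul, abs_pow, Nat.abs_cast,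
          abs_of_pos (by positivity : 0 < 1 / ((m : ℝ) + 1))]
    _ ≤ (C / N ^ 2) ^ m * 1 * (N ^ m / m !) * (N ^ m / m !) := by
        have := pow_nonneg hCN m
        gcongr
        exacts [hchoose ha, hchoose hb]
    _ = C ^ m / m ! / m ! := by
        rw [div_pow, ← pow_mul]
        field_simp
        ring
    _ ≤ C ^ m / m ! := div_le_self (by positivity) hfac

lemma tendsto_hypergeomTerm {z : ℕ → ℝ} {a b : ℕ → ℕ} {ζ α β : ℝ}
    (hz : Tendsto (fun n => z n * n ^ 2) atTop (𝓝 ζ))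
    (ha : Tendsto (fun n => (a n : ℝ) / n) atTop (𝓝 α))
    (hb : Tendsto (fun n => (b n : ℝ) / n) atTop (𝓝 β)) (m : ℕ) :
    Tendsto (fun n => hypergeomTerm (z n) (a n) (b n) m) atTop
      (𝓝 ((ζ * α * β) ^ m / ((m ! : ℝ) ^ 2 * (m + 1)))) := by
  have hlim := (((hz.pow m).mul_const (1 / ((m : ℝ) + 1))).mul
    (tendsto_choose_div_pow ha m)).mul (tendsto_choose_div_pow hb m)
  convert hlim.congr' ((eventually_ne_atTop 0).mono fun n hn => ?_) using 2
  · field_simp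
    ring
  · have hn : (n : ℝ) ≠ 0 := by exact_mod_cast hn
    simp only [hypergeomTerm]
    field_simp
    ring

theorem tendsto_tsum_hypergeomTerm {z : ℕ → ℝ} {a b : ℕ → ℕ} {ζ α β C : ℝ}
    (hz : Tendsto (fun n => z n * n ^ 2) atTop (𝓝 ζ))
    (hzC : ∀ᶠ n : ℕ in atTop, |z n| ≤ C / n ^ 2)
    (ha : Tendsto (fun n => (a n : ℝ) / n) atTop (𝓝 α))
    (hb : Tendsto (fun n => (b n : ℝ) / n) atTop (𝓝 β))
    (han : ∀ᶠ n in atTop, a n ≤ n) (hbn : ∀ᶠ n in atTop, b n ≤ n) :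
    Tendsto (fun n => ∑' m, hypergeomTerm (z n) (a n) (b n) m) atTop
      (𝓝 (∑' m : ℕ, (ζ * α * β) ^ m / ((m ! : ℝ) ^ 2 * (m + 1)))) := by
  refine tendsto_tsum_of_dominated_convergence (Real.summable_pow_div_factorial C)
    (tendsto_hypergeomTerm hz ha hb) ?_
  filter_upwards [hzC, han, hbn, eventually_gt_atTop 0] with n hzn hanl hbnl hn
  exact norm_hypergeomTerm_le (by exact_mod_cast hn) hzn (by exact_mod_cast hanl)
    (by exact_mod_cast hbnl)

open Filter Topology in
theorem hypergeom_limit_two_general (θ : ℝ) (hθ : 0 < θ)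
    (x : ℝ) (hx : 0 < x) (hx2 : x < 1 / 2) (k : ℕ → ℕ)
    (hk : ∀ n : ℕ, 2 ≤ n → 1 ≤ k n ∧ k n ≤ n - 1)
    (hkx : Tendsto (fun n : ℕ => (k n : ℝ) / n) atTop (𝓝 x)) :
    Tendsto (fun n : ℕ =>
        ∑ γ ∈ Finset.Icc 1 (k n),
          ((1 - (1 - θ / n)) ^ 2 / (1 - θ / n) ^ 2) ^ (γ - 1) * (1 / (γ : ℝ))
            * (Nat.choose (k n - 1) (γ - 1) : ℝ) * (Nat.choose (n - k n - 1) (γ - 1) : ℝ))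
      atTop
      (𝓝 (besselI1 (2 * θ * Real.sqrt (x * (1 - x))) / (θ * Real.sqrt (x * (1 - x))))) := by
  have hk' : ∀ᶠ n in atTop, 1 ≤ k n ∧ k n ≤ n - 1 := eventually_atTop.2 ⟨2, hk⟩
  have hlim := tendsto_tsum_hypergeomTerm (tendsto_one_sub_sub_sq_div_sq_mul_sq θ)
    (eventually_abs_one_sub_sub_sq_div_sq_le θ) (tendsto_natCast_sub_div hkx 1)
    (tendsto_natCast_sub_div (tendsto_sub_natCast_div (hk'.mono fun n h => by omega) hkx) 1)
    (hk'.mono fun n h => by omega) (.of_forall fun n => by omega)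
  have hw : 0 < x * (1 - x) := by nlinarith
  rw [mul_assoc 2, besselI1_two_mul_div _ (by positivity), mul_pow, Real.sq_sqrt hw.le,
    ← mul_assoc]
  exact hlim.congr' (hk'.mono fun n h => (sum_Icc_eq_tsum_hypergeomTerm _ h.1 _).symm)

open Filter Topology in
/-- Lemma 8 (second part): with `aₙ = 1 − θ/n`, `zₙ = (1−aₙ)²/aₙ²` and `kₙ/n → x ∈ (0,1/2)`,
`Σ_{γ=1}^{kₙ} zₙ^{γ−1} (1/γ) C(kₙ−1,γ−1) C(n−kₙ−1,γ−1) → I₁(2θ√(x(1−x)))/(θ√(x(1−x)))`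
as `n → ∞` (the sum equals `₂F₁(−(kₙ−1), −(n−kₙ−1); 2; zₙ)`). -/
theorem hypergeom_limit_two (θ : ℝ) (hθ : 0 < θ) (hθ1 : θ < 1)
    (x : ℝ) (hx : 0 < x) (hx2 : x < 1 / 2) (k : ℕ → ℕ)
    (hk : ∀ n : ℕ, 2 ≤ n → 1 ≤ k n ∧ k n ≤ n - 1)
    (hkx : Tendsto (fun n : ℕ => (k n : ℝ) / n) atTop (𝓝 x)) :
    Tendsto (fun n : ℕ =>
        ∑ γ ∈ Finset.Icc 1 (k n),
          ((1 - (1 - θ / n)) ^ 2 / (1 - θ / n) ^ 2) ^ (γ - 1) * (1 / (γ : ℝ))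
            * (Nat.choose (k n - 1) (γ - 1) : ℝ) * (Nat.choose (n - k n - 1) (γ - 1) : ℝ))
      atTop
      (𝓝 (besselI1 (2 * θ * Real.sqrt (x * (1 - x))) / (θ * Real.sqrt (x * (1 - x))))) :=
  hypergeom_limit_two_general θ hθ x hx hx2 k hk hkx
end
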